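/- arXiv:2307.12281 — 2 statements merged into one kernel-verified Lean document; each statement's English description precedes it below -/
import Mathlib

section
/- Let D: (0,∞) → ℝ have the form D(r) = ∫(1-e^{-rt})ν(dt) + Ar with A ≥ 0, ν a measure with ∫t²ν(dt) < ∞, and suppose D'(0) > 0 > D''(0). Define α(r) = 2D''(r)/σ_Y(r), β(r) = (D'(r)-D'(0))/σ_Y(r) where σ_Y(r) = √(D(r) - D'(r)²r/D'(0)) > 0. If for all r > 0 the inequality -2D''(0) > (α(r)r + β(r))β(r) holds, then for all r > 0: D(r) - D'(r)²r/D'(0) + D''(r)²r²/D''(0) + (D'(r)-D'(0))²/(2D''(0)) > 0. -/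
open MeasureTheory Real

/-!
Write `D'(r) = A + ∫ t e^{-rt} dν` and `D''(r) = -∫ t² e^{-rt} dν`. Since `(1 + x) e^{-x} ≤ 1`,
the integrand of `D'(0) - D'(r) + r D''(r)` is nonnegative, so `b := D'(r) - D'(0) ≤ a := r D''(r) ≤ 0`
(convexity of `D'`). Hence `2a² + b² ≤ (2a + b) b`, and the hypothesis multiplied by `σ_Y(r)²`
gives `2 D''(0) σ_Y(r)² + 2a² + b² < 0`, which is the claim multiplied by `2 D''(0) < 0`.
If `∫ t dν = ∞`, all the integrals above are junk zeros and `σ_Y(r) = 0`, which is excluded.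
-/

lemma add_one_mul_exp_neg_le_one (x : ℝ) : (x + 1) * exp (-x) ≤ 1 := by
  calc (x + 1) * exp (-x) ≤ exp x * exp (-x) :=
        mul_le_mul_of_nonneg_right (add_one_le_exp x) (exp_pos _).le
    _ = 1 := by rw [← exp_add, add_neg_cancel, exp_zero]

section ExpMoments

variable {μ : Measure ℝ} {r : ℝ}

lemma norm_exp_neg_mul_le_one (hr : 0 ≤ r) {t : ℝ} (ht : 0 ≤ t) : ‖exp (-r * t)‖ ≤ 1 := by
  rw [norm_of_nonneg (exp_pos _).le, exp_le_one_iff]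
  nlinarith

lemma MeasureTheory.Integrable.mul_exp_neg_mul {f : ℝ → ℝ} (hμ : ∀ᵐ t ∂μ, 0 ≤ t)
    (hf : Integrable f μ) (hr : 0 ≤ r) : Integrable (fun t => f t * exp (-r * t)) μ :=
  hf.mul_bdd (by fun_prop) (hμ.mono fun _ ht => norm_exp_neg_mul_le_one hr ht)

lemma integrable_of_integrable_mul_exp_neg_mul (hμ : ∀ᵐ t ∂μ, 0 ≤ t)
    (h2 : Integrable (fun t => t ^ 2) μ) (hr : 0 ≤ r)
    (h : Integrable (fun t => t * exp (-r * t)) μ) : Integrable (fun t => t) μ := by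
  refine ((h.const_mul (exp r)).add h2).mono' (by fun_prop) (hμ.mono fun t ht => ?_)
  rw [norm_of_nonneg ht, Pi.add_apply]
  rcases le_or_gt t 1 with ht1 | ht1
  · have hexp : 1 ≤ exp r * exp (-r * t) := by
      rw [← exp_add]
      exact one_le_exp (by nlinarith)
    nlinarith [sq_nonneg t]
  · have : 0 ≤ exp r * (t * exp (-r * t)) := by positivity
    nlinarith

lemma integrable_mul_exp_neg_mul_of_integrable_one_sub_exp (hμ : ∀ᵐ t ∂μ, 0 ≤ t) (hr : 0 < r)
    (h : Integrable (fun t => 1 - exp (-r * t)) μ) :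
    Integrable (fun t => t * exp (-r * t)) μ := by
  refine (h.const_mul r⁻¹).mono' (by fun_prop) (hμ.mono fun t ht => ?_)
  have hle := add_one_mul_exp_neg_le_one (r * t)
  rw [← neg_mul] at hle
  show ‖t * exp (-r * t)‖ ≤ r⁻¹ * (1 - exp (-r * t))
  rw [norm_of_nonneg (by positivity), le_inv_mul_iff₀ hr]
  nlinarith

lemma integral_mul_exp_neg_mul_add_le (hμ : ∀ᵐ t ∂μ, 0 ≤ t) (h1 : Integrable (fun t => t) μ)
    (h2 : Integrable (fun t => t ^ 2) μ) (hr : 0 ≤ r) :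
    ∫ t, t * exp (-r * t) ∂μ + r * ∫ t, t ^ 2 * exp (-r * t) ∂μ ≤ ∫ t, t ∂μ := by
  have hI1 := h1.mul_exp_neg_mul hμ hr
  have hI2 := (h2.mul_exp_neg_mul hμ hr).const_mul r
  rw [← integral_const_mul, ← integral_add hI1 hI2]
  refine integral_mono_ae (hI1.add hI2) h1 (hμ.mono fun t ht => ?_)
  have hle := add_one_mul_exp_neg_le_one (r * t)
  rw [← neg_mul] at hle
  nlinarith

lemma integral_mul_exp_neg_mul_of_not_integrable (hμ : ∀ᵐ t ∂μ, 0 ≤ t)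
    (h2 : Integrable (fun t => t ^ 2) μ) (hr : 0 ≤ r) (h1 : ¬Integrable (fun t => t) μ) :
    ∫ t, t * exp (-r * t) ∂μ = 0 :=
  integral_undef (mt (integrable_of_integrable_mul_exp_neg_mul hμ h2 hr) h1)

lemma integral_one_sub_exp_neg_mul_of_not_integrable (hμ : ∀ᵐ t ∂μ, 0 ≤ t)
    (h2 : Integrable (fun t => t ^ 2) μ) (hr : 0 < r) (h1 : ¬Integrable (fun t => t) μ) :
    ∫ t, (1 - exp (-r * t)) ∂μ = 0 :=
  integral_undef fun h => h1 <| integrable_of_integrable_mul_exp_neg_mul hμ h2 hr.le <|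
    integrable_mul_exp_neg_mul_of_integrable_one_sub_exp hμ hr h

end ExpMoments

lemma add_sq_div_add_sq_div_pos {d S a b : ℝ} (hd : d < 0) (ha : a ≤ 0) (hba : b ≤ a)
    (h : (2 * a + b) * b < -2 * d * S) : 0 < S + a ^ 2 / d + b ^ 2 / (2 * d) := by
  have hd0 : d ≠ 0 := hd.ne
  have hsum : 2 * d * S + 2 * a ^ 2 + b ^ 2 < 0 := by
    nlinarith [mul_nonneg_of_nonpos_of_nonpos ha (sub_nonpos.mpr hba)]
  have hform : S + a ^ 2 / d + b ^ 2 / (2 * d) = (2 * d * S + 2 * a ^ 2 + b ^ 2) / (2 * d) := by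
    field_simp
  rw [hform]
  exact div_pos_of_neg_of_neg hsum (by linarith)

theorem stmt_17_general (ν : Measure ℝ) (A : ℝ)
    (hν2 : Integrable (fun t => t ^ 2) (ν.restrict (Set.Ioi 0)))
    (D D' D'' : ℝ → ℝ)
    (hD : ∀ r : ℝ, D r = (∫ t in Set.Ioi (0 : ℝ), (1 - exp (-r * t)) ∂ν) + A * r)
    (hD' : ∀ r : ℝ, D' r = A + ∫ t in Set.Ioi (0 : ℝ), t * exp (-r * t) ∂ν)
    (hD'' : ∀ r : ℝ, D'' r = -∫ t in Set.Ioi (0 : ℝ), t ^ 2 * exp (-r * t) ∂ν)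
    (hneg : D'' 0 < 0)
    (σY α β : ℝ → ℝ)
    (hσ : ∀ r : ℝ, σY r = Real.sqrt (D r - D' r ^ 2 * r / D' 0))
    (hσpos : ∀ r > (0 : ℝ), 0 < σY r)
    (hα : ∀ r : ℝ, α r = 2 * D'' r / σY r)
    (hβ : ∀ r : ℝ, β r = (D' r - D' 0) / σY r)
    (har : ∀ r > (0 : ℝ), -2 * D'' 0 > (α r * r + β r) * β r) :
    ∀ r > (0 : ℝ),
      D r - D' r ^ 2 * r / D' 0 + D'' r ^ 2 * r ^ 2 / D'' 0
        + (D' r - D' 0) ^ 2 / (2 * D'' 0) > 0 := by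
  intro r hr
  have hμ : ∀ᵐ t ∂ν.restrict (Set.Ioi 0), 0 ≤ t :=
    ae_restrict_of_forall_mem measurableSet_Ioi fun _ ht => le_of_lt ht
  have hD'0 : D' 0 = A + ∫ t in Set.Ioi (0 : ℝ), t ∂ν := by simpa using hD' 0
  have hσr := hσpos r hr
  by_cases hT : Integrable (fun t => t) (ν.restrict (Set.Ioi 0))
  · have hb : D' r - D' 0 ≤ D'' r * r := by
      have := integral_mul_exp_neg_mul_add_le hμ hT hν2 hr.le
      rw [hD' r, hD'0, hD'' r]
      linarith
    have ha : D'' r * r ≤ 0 := by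
      rw [hD'' r, neg_mul]
      exact neg_nonpos.mpr (mul_nonneg (integral_nonneg fun t => by positivity) hr.le)
    have hS : σY r ^ 2 = D r - D' r ^ 2 * r / D' 0 := by
      rw [hσ r] at hσr ⊢
      exact sq_sqrt (sqrt_pos.mp hσr).le
    have hαβ : (α r * r + β r) * β r
        = (2 * (D'' r * r) + (D' r - D' 0)) * (D' r - D' 0) / σY r ^ 2 := by
      rw [hα r, hβ r]
      field_simp
    have key := har r hr
    rw [gt_iff_lt, hαβ, div_lt_iff₀ (by positivity), hS] at key
    simpa only [mul_pow] using add_sq_div_add_sq_div_pos hneg ha hb key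
  · exfalso
    rw [hσ r, hD r, hD' r, hD'0, integral_undef hT,
      integral_mul_exp_neg_mul_of_not_integrable hμ hν2 hr.le hT,
      integral_one_sub_exp_neg_mul_of_not_integrable hμ hν2 hr hT] at hσr
    rw [add_zero, zero_add, mul_div_right_comm, sq, mul_self_div_self, sub_self,
      sqrt_zero] at hσr
    exact lt_irrefl 0 hσr

theorem stmt_17 (ν : Measure ℝ) (A : ℝ) (hA : 0 ≤ A)
    (hν2 : Integrable (fun t => t ^ 2) (ν.restrict (Set.Ioi 0)))
    (D D' D'' : ℝ → ℝ)
    (hD : ∀ r : ℝ, D r = (∫ t in Set.Ioi (0 : ℝ), (1 - exp (-r * t)) ∂ν) + A * r)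
    (hD' : ∀ r : ℝ, D' r = A + ∫ t in Set.Ioi (0 : ℝ), t * exp (-r * t) ∂ν)
    (hD'' : ∀ r : ℝ, D'' r = -∫ t in Set.Ioi (0 : ℝ), t ^ 2 * exp (-r * t) ∂ν)
    (hpos : D' 0 > 0) (hneg : D'' 0 < 0)
    (σY α β : ℝ → ℝ)
    (hσ : ∀ r : ℝ, σY r = Real.sqrt (D r - D' r ^ 2 * r / D' 0))
    (hσpos : ∀ r > (0 : ℝ), 0 < σY r)
    (hα : ∀ r : ℝ, α r = 2 * D'' r / σY r)
    (hβ : ∀ r : ℝ, β r = (D' r - D' 0) / σY r)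
    (har : ∀ r > (0 : ℝ), -2 * D'' 0 > (α r * r + β r) * β r) :
    ∀ r > (0 : ℝ),
      D r - D' r ^ 2 * r / D' 0 + D'' r ^ 2 * r ^ 2 / D'' 0
        + (D' r - D' 0) ^ 2 / (2 * D'' 0) > 0 :=
  stmt_17_general ν A hν2 D D' D'' hD hD' hD'' hneg σY α β hσ hσpos hα hβ har
end

section
/- Let N ≥ 2 and r > 0, and let D_N be four times differentiable at 0 with D_N''(0) < 0. Define α, β real numbers (depending on r) and set d₁ = 1/2 + β²/(4D_N''(0)), d₂ = αβr/(4D_N''(0)), d₃ = α²r²/(4D_N''(0)). If d₁ > -1/(N-1) and 1 + d₃ + (d₁ + 2d₂ - (N-1)d₂²)/(1 + (N-1)d₁) > 0, then 1 + N/2 + (N+1)α²r²/(8D_N''(0)) + αβr/(2D_N''(0)) + Nβ²/(4D_N''(0)) > 0, and conversely. -/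
/-!
Write `P = 1 + (N-1) d₁` and `E` for the right-hand side. The first condition says `P > 0`, and
the identity `d₁ d₃ - d₂² = d₃ / 2` turns the Schur-complement numerator `P (1 + d₃) + d₁ + 2d₂ -
(N-1) d₂²` into `E`, so under `P > 0` the second condition is `E > 0`. Conversely `E > 0` forces
`P > 0`, because `(N+2) P - (N+1) E = ((N+1) α r + 2β)² / (-8K) ≥ 0`.
-/

lemma neg_one_div_lt_iff_pos_one_add_mul {m d : ℝ} (hm : 0 < m) :
    -(1 / m) < d ↔ 0 < 1 + m * d := by
  rw [← neg_div, div_lt_iff₀ hm]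
  constructor <;> intro h <;> linarith

lemma pos_and_add_div_pos_iff {P a b : ℝ} :
    (0 < P ∧ 0 < a + b / P) ↔ (0 < P ∧ 0 < P * a + b) := by
  refine and_congr_right fun hP => ?_
  rw [← mul_pos_iff_of_pos_left hP, mul_add, mul_div_cancel₀ b hP.ne']

section SGOI

variable {K α β r d₁ d₂ d₃ : ℝ}

lemma sgoi_minor_eq (hd₁ : d₁ = 1 / 2 + β ^ 2 / (4 * K)) (hd₂ : d₂ = α * β * r / (4 * K))
    (hd₃ : d₃ = α ^ 2 * r ^ 2 / (4 * K)) :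
    d₁ * d₃ - d₂ ^ 2 = d₃ / 2 := by
  subst hd₁ hd₂ hd₃
  ring

lemma schur_numerator_eq (n : ℝ) (h : d₁ * d₃ - d₂ ^ 2 = d₃ / 2) :
    (1 + (n - 1) * d₁) * (1 + d₃) + (d₁ + 2 * d₂ - (n - 1) * d₂ ^ 2)
      = 1 + n * d₁ + (n + 1) / 2 * d₃ + 2 * d₂ := by
  linear_combination (n - 1) * h

lemma sgoi_nondeg_le (n : ℝ) (hK : K < 0) (hd₁ : d₁ = 1 / 2 + β ^ 2 / (4 * K))
    (hd₂ : d₂ = α * β * r / (4 * K)) (hd₃ : d₃ = α ^ 2 * r ^ 2 / (4 * K)) :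
    (n + 1) * (1 + n * d₁ + (n + 1) / 2 * d₃ + 2 * d₂) ≤ (n + 2) * (1 + (n - 1) * d₁) := by
  have hdiff : (n + 2) * (1 + (n - 1) * d₁) - (n + 1) * (1 + n * d₁ + (n + 1) / 2 * d₃ + 2 * d₂)
      = ((n + 1) * α * r + 2 * β) ^ 2 / (-(8 * K)) := by
    subst hd₁ hd₂ hd₃
    ring
  have : 0 ≤ ((n + 1) * α * r + 2 * β) ^ 2 / (-(8 * K)) :=
    div_nonneg (sq_nonneg _) (by linarith)
  linarith

end SGOI

theorem stmt_18_general (N : ℕ) (hN : 2 ≤ N) (r K α β : ℝ) (hK : K < 0)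
    (d₁ d₂ d₃ : ℝ)
    (hd₁ : d₁ = 1 / 2 + β ^ 2 / (4 * K))
    (hd₂ : d₂ = α * β * r / (4 * K))
    (hd₃ : d₃ = α ^ 2 * r ^ 2 / (4 * K)) :
    (d₁ > -(1 / (N - 1 : ℝ)) ∧
      1 + d₃ + (d₁ + 2 * d₂ - (N - 1 : ℝ) * d₂ ^ 2) / (1 + (N - 1 : ℝ) * d₁) > 0) ↔
    1 + (N : ℝ) / 2 + (N + 1 : ℝ) * α ^ 2 * r ^ 2 / (8 * K)
      + α * β * r / (2 * K) + (N : ℝ) * β ^ 2 / (4 * K) > 0 := by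
  have hN' : (0 : ℝ) < N - 1 := by
    have : (2 : ℝ) ≤ N := by exact_mod_cast hN
    linarith
  have hE : 1 + (N : ℝ) / 2 + (N + 1 : ℝ) * α ^ 2 * r ^ 2 / (8 * K) + α * β * r / (2 * K)
      + (N : ℝ) * β ^ 2 / (4 * K) = 1 + N * d₁ + (N + 1) / 2 * d₃ + 2 * d₂ := by
    subst hd₁ hd₂ hd₃
    ring
  have hP : 0 < 1 + N * d₁ + (N + 1) / 2 * d₃ + 2 * d₂ → 0 < 1 + (N - 1 : ℝ) * d₁ := fun hE =>
    pos_of_mul_pos_right ((mul_pos (by linarith) hE).trans_le (sgoi_nondeg_le N hK hd₁ hd₂ hd₃))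
      (by linarith)
  rw [gt_iff_lt, gt_iff_lt, gt_iff_lt, neg_one_div_lt_iff_pos_one_add_mul hN',
    pos_and_add_div_pos_iff, schur_numerator_eq N (sgoi_minor_eq hd₁ hd₂ hd₃), hE]
  exact and_iff_right_of_imp hP

theorem stmt_18 (N : ℕ) (hN : 2 ≤ N) (r K α β : ℝ) (hr : 0 < r) (hK : K < 0)
    (d₁ d₂ d₃ : ℝ)
    (hd₁ : d₁ = 1 / 2 + β ^ 2 / (4 * K))
    (hd₂ : d₂ = α * β * r / (4 * K))
    (hd₃ : d₃ = α ^ 2 * r ^ 2 / (4 * K)) :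
    (d₁ > -(1 / (N - 1 : ℝ)) ∧
      1 + d₃ + (d₁ + 2 * d₂ - (N - 1 : ℝ) * d₂ ^ 2) / (1 + (N - 1 : ℝ) * d₁) > 0) ↔
    1 + (N : ℝ) / 2 + (N + 1 : ℝ) * α ^ 2 * r ^ 2 / (8 * K)
      + α * β * r / (2 * K) + (N : ℝ) * β ^ 2 / (4 * K) > 0 :=
  stmt_18_general N hN r K α β hK d₁ d₂ d₃ hd₁ hd₂ hd₃
end
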